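/- arXiv:2509.04274 — 4 statements merged into one kernel-verified Lean document; each statement's English description precedes it below -/
import Mathlib

section
/- There are exactly 9 additively stable subsets of Φ of cardinality 2: the six pairs of (cyclically) adjacent elements {(1,0),(0,1)}, {(0,1),(-1,1)}, {(-1,1),(-1,0)}, {(-1,0),(0,-1)}, {(0,-1),(1,-1)}, {(1,-1),(1,0)}, and the three pairs of opposite elements {(1,0),(-1,0)}, {(0,1),(0,-1)}, {(1,-1),(-1,1)}. -/
/-!
Of the fifteen pairs in `Φ`, six are pairs of non-adjacent, non-opposite roots; their sum is the
root lying between them, so they are not stable. Each of the other nine pairs is cut out of `Φ` by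
two closed half-planes (bounding a sector between adjacent roots, or a line through opposite
roots). Their intersection is a submonoid of `ℤ²`, so it contains the closure of the pair, which
therefore meets `Φ` only in the pair.
-/

def Phi : Finset (ℤ × ℤ) := {(1,0),(0,1),(1,-1),(0,-1),(-1,1),(-1,0)}

def addStable (E : Finset (ℤ × ℤ)) : Prop :=
  (AddSubmonoid.closure (E : Set (ℤ × ℤ)) : Set (ℤ × ℤ)) ∩ (Phi : Set (ℤ × ℤ)) = (E : Set (ℤ × ℤ))

lemma addStable_of_le {E : Finset (ℤ × ℤ)} (S : AddSubmonoid (ℤ × ℤ)) (hE : E ⊆ Phi)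
    (hES : (E : Set (ℤ × ℤ)) ⊆ S) (hS : ∀ x ∈ Phi, x ∈ S → x ∈ E) : addStable E := by
  refine Set.Subset.antisymm ?_ fun x hx => ⟨AddSubmonoid.subset_closure hx, hE hx⟩
  rintro x ⟨hx, hxΦ⟩
  exact hS x hxΦ (AddSubmonoid.closure_le.mpr hES hx)

lemma not_addStable_of_add_mem {E : Finset (ℤ × ℤ)} {a b : ℤ × ℤ} (ha : a ∈ E) (hb : b ∈ E)
    (hab : a + b ∈ Phi \ E) : ¬ addStable E := by
  intro hE
  have hmem : a + b ∈ (AddSubmonoid.closure (E : Set (ℤ × ℤ)) : Set (ℤ × ℤ)) ∩ Phi :=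
    ⟨add_mem (AddSubmonoid.subset_closure ha) (AddSubmonoid.subset_closure hb),
      (Finset.mem_sdiff.mp hab).1⟩
  rw [hE] at hmem
  exact (Finset.mem_sdiff.mp hab).2 hmem

def halfPlane (u : ℤ × ℤ) : AddSubmonoid (ℤ × ℤ) where
  carrier := {p | 0 ≤ u.1 * p.1 + u.2 * p.2}
  zero_mem' := by simp
  add_mem' {p q} hp hq := by
    simp only [Set.mem_ofPred_eq, Prod.fst_add, Prod.snd_add] at *
    linarith

lemma addStable_of_eq_inter_halfPlane {E : Finset (ℤ × ℤ)} (u v : ℤ × ℤ) (hE : E ⊆ Phi)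
    (h : ∀ x ∈ Phi, (0 ≤ u.1 * x.1 + u.2 * x.2 ∧ 0 ≤ v.1 * x.1 + v.2 * x.2 ↔ x ∈ E)) :
    addStable E :=
  addStable_of_le (halfPlane u ⊓ halfPlane v) hE (fun x hx => (h x (hE hx)).mpr hx)
    fun x hx hxS => (h x hx).mp hxS

def stablePairs : Finset (Finset (ℤ × ℤ)) :=
  { {(1,0),(0,1)}, {(0,1),(-1,1)}, {(-1,1),(-1,0)}, {(-1,0),(0,-1)},
    {(0,-1),(1,-1)}, {(1,-1),(1,0)},
    {(1,0),(-1,0)}, {(0,1),(0,-1)}, {(1,-1),(-1,1)} }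

lemma addStable_of_mem_stablePairs {E : Finset (ℤ × ℤ)} (h : E ∈ stablePairs) : addStable E := by
  simp only [stablePairs, Finset.mem_insert, Finset.mem_singleton] at h
  rcases h with rfl | rfl | rfl | rfl | rfl | rfl | rfl | rfl | rfl
  · exact addStable_of_eq_inter_halfPlane (1, 0) (0, 1) (by decide) (by decide)
  · exact addStable_of_eq_inter_halfPlane (-1, 0) (1, 1) (by decide) (by decide)
  · exact addStable_of_eq_inter_halfPlane (0, 1) (-1, -1) (by decide) (by decide)
  · exact addStable_of_eq_inter_halfPlane (-1, 0) (0, -1) (by decide) (by decide)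
  · exact addStable_of_eq_inter_halfPlane (1, 0) (-1, -1) (by decide) (by decide)
  · exact addStable_of_eq_inter_halfPlane (0, -1) (1, 1) (by decide) (by decide)
  · exact addStable_of_eq_inter_halfPlane (0, 1) (0, -1) (by decide) (by decide)
  · exact addStable_of_eq_inter_halfPlane (1, 0) (-1, 0) (by decide) (by decide)
  · exact addStable_of_eq_inter_halfPlane (1, 1) (-1, -1) (by decide) (by decide)

lemma pair_mem_stablePairs_or_add_mem :
    ∀ a ∈ Phi, ∀ b ∈ Phi, a ≠ b → {a, b} ∈ stablePairs ∨ a + b ∈ Phi \ {a, b} := by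
  decide

lemma mem_stablePairs_iff {E : Finset (ℤ × ℤ)} :
    E ∈ stablePairs ↔ E ⊆ Phi ∧ E.card = 2 ∧ addStable E := by
  constructor
  · intro h
    have hpairs : ∀ E ∈ stablePairs, E ⊆ Phi ∧ E.card = 2 := by decide
    exact ⟨(hpairs E h).1, (hpairs E h).2, addStable_of_mem_stablePairs h⟩
  · rintro ⟨hE, hcard, hstable⟩
    obtain ⟨a, b, hab, rfl⟩ := Finset.card_eq_two.mp hcard
    refine (pair_mem_stablePairs_or_add_mem a (hE (by simp)) b (hE (by simp)) hab).resolve_right ?_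
    exact fun hsum => not_addStable_of_add_mem (by simp) (by simp) hsum hstable

theorem stmt_6 :
    {E : Finset (ℤ × ℤ) | E ⊆ Phi ∧ E.card = 2 ∧ addStable E} =
      ({ {(1,0),(0,1)}, {(0,1),(-1,1)}, {(-1,1),(-1,0)}, {(-1,0),(0,-1)},
         {(0,-1),(1,-1)}, {(1,-1),(1,0)},
         {(1,0),(-1,0)}, {(0,1),(0,-1)}, {(1,-1),(-1,1)} } : Set (Finset (ℤ × ℤ))) ∧
    {E : Finset (ℤ × ℤ) | E ⊆ Phi ∧ E.card = 2 ∧ addStable E}.ncard = 9 := by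
  have hset : {E : Finset (ℤ × ℤ) | E ⊆ Phi ∧ E.card = 2 ∧ addStable E} = stablePairs :=
    Set.ext fun _ => mem_stablePairs_iff.symm
  rw [hset, Set.ncard_coe_finset]
  exact ⟨by simp [stablePairs], by decide⟩
end

section
/- There are exactly 6 additively stable subsets of Φ of cardinality 4, namely the six sets of four cyclically consecutive elements of Φ. -/
def cyclicArcs : Finset (Finset (ℤ × ℤ)) :=
  { {(1,0),(1,-1),(0,-1),(-1,0)}, {(1,-1),(0,-1),(-1,0),(-1,1)},
    {(0,-1),(-1,0),(-1,1),(0,1)}, {(-1,0),(-1,1),(0,1),(1,0)},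
    {(-1,1),(0,1),(1,0),(1,-1)}, {(0,1),(1,0),(1,-1),(0,-1)} }

lemma addStable.add_mem {E : Finset (ℤ × ℤ)} (hE : addStable E) {p q : ℤ × ℤ}
    (hp : p ∈ E) (hq : q ∈ E) (hpq : p + q ∈ Phi) : p + q ∈ E := by
  have h : p + q ∈ (AddSubmonoid.closure (E : Set (ℤ × ℤ)) : Set (ℤ × ℤ)) ∩ Phi :=
    ⟨AddSubmonoid.add_mem _ (AddSubmonoid.subset_closure hp) (AddSubmonoid.subset_closure hq), hpq⟩
  rwa [hE] at h

lemma addStable_filter_nonneg (f : ℤ × ℤ →+ ℤ) : addStable (Phi.filter fun p => 0 ≤ f p) := by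
  set E := Phi.filter fun p => 0 ≤ f p
  have hclosure : AddSubmonoid.closure (E : Set (ℤ × ℤ)) ≤ (AddSubmonoid.nonneg ℤ).comap f :=
    AddSubmonoid.closure_le.2 fun p hp => (Finset.mem_filter.1 hp).2
  refine Set.Subset.antisymm (fun p ⟨hp, hpΦ⟩ => Finset.mem_filter.2 ⟨hpΦ, hclosure hp⟩)
    fun p hp => ⟨AddSubmonoid.subset_closure hp, (Finset.mem_filter.1 hp).1⟩

lemma mem_cyclicArcs_of_add_mem :
    ∀ E ∈ Phi.powersetCard 4, (∀ p ∈ E, ∀ q ∈ E, p + q ∈ Phi → p + q ∈ E) → E ∈ cyclicArcs := by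
  decide

lemma cyclicArcs_subset_powersetCard : cyclicArcs ⊆ Phi.powersetCard 4 := by
  decide

lemma addStable_of_mem_cyclicArcs {E : Finset (ℤ × ℤ)} (hE : E ∈ cyclicArcs) : addStable E := by
  simp only [cyclicArcs, Finset.mem_insert, Finset.mem_singleton] at hE
  rcases hE with rfl | rfl | rfl | rfl | rfl | rfl
  · convert addStable_filter_nonneg (-AddMonoidHom.snd ℤ ℤ) using 1; decide
  · convert addStable_filter_nonneg (-AddMonoidHom.fst ℤ ℤ - AddMonoidHom.snd ℤ ℤ) using 1; decide
  · convert addStable_filter_nonneg (-AddMonoidHom.fst ℤ ℤ) using 1; decide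
  · convert addStable_filter_nonneg (AddMonoidHom.snd ℤ ℤ) using 1; decide
  · convert addStable_filter_nonneg (AddMonoidHom.fst ℤ ℤ + AddMonoidHom.snd ℤ ℤ) using 1; decide
  · convert addStable_filter_nonneg (AddMonoidHom.fst ℤ ℤ) using 1; decide

theorem stmt_8 :
    {E : Finset (ℤ × ℤ) | E ⊆ Phi ∧ E.card = 4 ∧ addStable E} =
      ({ {(1,0),(1,-1),(0,-1),(-1,0)}, {(1,-1),(0,-1),(-1,0),(-1,1)},
         {(0,-1),(-1,0),(-1,1),(0,1)}, {(-1,0),(-1,1),(0,1),(1,0)},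
         {(-1,1),(0,1),(1,0),(1,-1)}, {(0,1),(1,0),(1,-1),(0,-1)} } :
        Set (Finset (ℤ × ℤ))) ∧
    {E : Finset (ℤ × ℤ) | E ⊆ Phi ∧ E.card = 4 ∧ addStable E}.ncard = 6 := by
  have hclass : {E : Finset (ℤ × ℤ) | E ⊆ Phi ∧ E.card = 4 ∧ addStable E} = cyclicArcs := by
    ext E
    refine ⟨fun ⟨hsub, hcard, hstable⟩ => ?_, fun hE => ?_⟩
    · exact mem_cyclicArcs_of_add_mem E (Finset.mem_powersetCard.2 ⟨hsub, hcard⟩)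
        fun p hp q hq => hstable.add_mem hp hq
    · obtain ⟨hsub, hcard⟩ := Finset.mem_powersetCard.1 (cyclicArcs_subset_powersetCard hE)
      exact ⟨hsub, hcard, addStable_of_mem_cyclicArcs hE⟩
  refine ⟨hclass.trans (by simp [cyclicArcs]), ?_⟩
  rw [hclass, Set.ncard_coe_finset]
  rfl
end

section
/- Let E = {a, b, a+b} ⊆ Φ be additively stable with a, b ∈ Φ and a+b ∈ Φ. Then {a,b} is a ℤ-basis of ℤ², and the group homomorphism f : ℤ² → ℤ determined by f(a) = f(b) = 1 satisfies f⁻¹(ℕ) ∩ Φ = {a, b, a+b}. -/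
/-! If `a`, `b` and `a + b` are roots of the root system `Φ` of type `A₂`, then the six roots are
exactly `±a`, `±b`, `±(a + b)`, and `det (a, b) = ±1`. Hence `{a, b}` is a basis of `ℤ²`; the form
summing the two coordinates in this basis takes the values `1, 1, 2` on `a, b, a + b` and is
negative on their opposites. -/

section Plane

variable {R : Type*} [CommRing R]

def det2 (a b : R × R) : R := a.1 * b.2 - a.2 * b.1

theorem existsUnique_eq_smul_add_smul {a b : R × R} {d : R} (hd : d * det2 a b = 1)
    (v : R × R) : ∃! p : R × R, v = p.1 • a + p.2 • b := by
  unfold det2 at hd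
  refine ⟨(d * (v.1 * b.2 - v.2 * b.1), d * (a.1 * v.2 - a.2 * v.1)), ?_, ?_⟩
  · simp only [Prod.ext_iff, Prod.fst_add, Prod.snd_add, Prod.smul_fst, Prod.smul_snd,
      smul_eq_mul]
    constructor
    · linear_combination -v.1 * hd
    · linear_combination -v.2 * hd
  · rintro ⟨x, y⟩ hv
    simp only [Prod.ext_iff, Prod.fst_add, Prod.snd_add, Prod.smul_fst, Prod.smul_snd,
      smul_eq_mul] at hv ⊢
    obtain ⟨h1, h2⟩ := hv
    constructor
    · linear_combination -x * hd - d * b.2 * h1 + d * b.1 * h2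
    · linear_combination -y * hd + d * a.2 * h1 - d * a.1 * h2

/-- With `d = (det2 a b)⁻¹`, the sum of the coordinates of `v` in the basis `a, b` (Cramer's rule). -/
def coordSum (a b : R × R) (d : R) : (R × R) →+ R where
  toFun v := d * ((v.1 * b.2 - v.2 * b.1) + (a.1 * v.2 - a.2 * v.1))
  map_zero' := by simp
  map_add' x y := by simp only [Prod.fst_add, Prod.snd_add]; ring

theorem coordSum_left (a b : R × R) (d : R) : coordSum a b d a = d * det2 a b := by
  simp only [coordSum, det2, AddMonoidHom.coe_mk, ZeroHom.coe_mk]; ring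

theorem coordSum_right (a b : R × R) (d : R) : coordSum a b d b = d * det2 a b := by
  simp only [coordSum, det2, AddMonoidHom.coe_mk, ZeroHom.coe_mk]; ring

end Plane

theorem Phi_eq_of_add_mem {a b : ℤ × ℤ} (ha : a ∈ Phi) (hb : b ∈ Phi) (hab : a + b ∈ Phi) :
    Phi = {a, b, a + b, -a, -b, -(a + b)} := by
  have h : ∀ a ∈ Phi, ∀ b ∈ Phi, a + b ∈ Phi → Phi = {a, b, a + b, -a, -b, -(a + b)} := by
    decide
  exact h a ha b hb hab

theorem det2_mul_self_of_add_mem {a b : ℤ × ℤ} (ha : a ∈ Phi) (hb : b ∈ Phi)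
    (hab : a + b ∈ Phi) : det2 a b * det2 a b = 1 := by
  have h : ∀ a ∈ Phi, ∀ b ∈ Phi, a + b ∈ Phi → det2 a b * det2 a b = 1 := by
    unfold det2; decide
  exact h a ha b hb hab

theorem stmt_13_general (a b : ℤ × ℤ) (ha : a ∈ Phi) (hb : b ∈ Phi) (hab : a + b ∈ Phi) :
    (∀ v : ℤ × ℤ, ∃! p : ℤ × ℤ, v = p.1 • a + p.2 • b) ∧
    ∃ f : (ℤ × ℤ) →+ ℤ, f a = 1 ∧ f b = 1 ∧
      Phi.filter (fun v => 0 ≤ f v) = ({a, b, a + b} : Finset (ℤ × ℤ)) := by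
  have hdet := det2_mul_self_of_add_mem ha hb hab
  have hfa : coordSum a b (det2 a b) a = 1 := (coordSum_left a b _).trans hdet
  have hfb : coordSum a b (det2 a b) b = 1 := (coordSum_right a b _).trans hdet
  refine ⟨existsUnique_eq_smul_add_smul hdet, coordSum a b (det2 a b), hfa, hfb, ?_⟩
  rw [Phi_eq_of_add_mem ha hb hab]
  simp [Finset.filter_insert, Finset.filter_singleton, hfa, hfb, -neg_add_rev]

theorem stmt_13 (a b : ℤ × ℤ) (ha : a ∈ Phi) (hb : b ∈ Phi) (hab : a + b ∈ Phi)
    (hE : addStable {a, b, a + b}) :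
    (∀ v : ℤ × ℤ, ∃! p : ℤ × ℤ, v = p.1 • a + p.2 • b) ∧
    ∃ f : (ℤ × ℤ) →+ ℤ, f a = 1 ∧ f b = 1 ∧
      Phi.filter (fun v => 0 ≤ f v) = ({a, b, a + b} : Finset (ℤ × ℤ)) :=
  stmt_13_general a b ha hb hab
end

section
/- An additively stable subset E ⊆ Φ is 'lambdafiable' (i.e., there exists a group homomorphism f : ℤ² → ℤ with f⁻¹(ℕ) ∩ Φ = E) if and only if #E ≥ 3. In particular exactly 13 of the 29 additively stable subsets are lambdafiable. -/
def lambdafiable (E : Finset (ℤ × ℤ)) : Prop :=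
  ∃ f : (ℤ × ℤ) →+ ℤ, Phi.filter (fun v => 0 ≤ f v) = E

def mk (a b : ℤ) : (ℤ × ℤ) →+ ℤ where
  toFun v := v.1 * a + v.2 * b
  map_zero' := by simp
  map_add' x y := by simp [Prod.fst_add, Prod.snd_add]; ring

def L13 : Finset (Finset (ℤ × ℤ)) :=
  { {(1,0),(0,1),(1,-1)}, {(1,0),(0,1),(-1,1)}, {(1,0),(1,-1),(0,-1)},
    {(0,1),(-1,1),(-1,0)}, {(1,-1),(0,-1),(-1,0)}, {(0,-1),(-1,1),(-1,0)},
    {(1,0),(0,1),(1,-1),(0,-1)}, {(1,0),(0,1),(-1,1),(-1,0)},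
    {(1,0),(0,1),(1,-1),(-1,1)}, {(1,0),(1,-1),(0,-1),(-1,0)},
    {(0,1),(0,-1),(-1,1),(-1,0)}, {(1,-1),(0,-1),(-1,1),(-1,0)},
    {(1,0),(0,1),(1,-1),(0,-1),(-1,1),(-1,0)} }

def S16 : Finset (Finset (ℤ × ℤ)) :=
  { ∅, {(1,0)}, {(0,1)}, {(1,-1)}, {(0,-1)}, {(-1,1)}, {(-1,0)},
    {(1,0),(0,1)}, {(1,0),(1,-1)}, {(1,0),(-1,0)}, {(0,1),(0,-1)},
    {(0,1),(-1,1)}, {(1,-1),(0,-1)}, {(1,-1),(-1,1)}, {(0,-1),(-1,0)},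
    {(-1,1),(-1,0)} }

lemma stab_of (E : Finset (ℤ × ℤ)) (fs : List ((ℤ × ℤ) →+ ℤ))
    (h : Phi.filter (fun v => ∀ f ∈ fs, 0 ≤ f v) = E) : addStable E := by
  unfold addStable
  ext w
  simp only [Set.mem_inter_iff, SetLike.mem_coe, Finset.mem_coe]
  constructor
  · rintro ⟨hw, hwPhi⟩
    have key : ∀ f ∈ fs, 0 ≤ f w := by
      refine AddSubmonoid.closure_induction (motive := fun x _ => ∀ f ∈ fs, 0 ≤ f x)
        ?_ ?_ ?_ hw
      · intro v hv
        have hv' : v ∈ E := Finset.mem_coe.1 hv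
        rw [← h] at hv'
        exact (Finset.mem_filter.1 hv').2
      · intro f _; simp
      · intro x y _ _ ihx ihy f hf
        rw [map_add]
        exact add_nonneg (ihx f hf) (ihy f hf)
    rw [← h]
    exact Finset.mem_filter.2 ⟨hwPhi, key⟩
  · intro hw
    refine ⟨AddSubmonoid.subset_closure (Finset.mem_coe.2 hw), ?_⟩
    have hsub : E ⊆ Phi := by rw [← h]; exact Finset.filter_subset _ _
    exact Finset.mem_coe.2 (hsub hw)

lemma lam_sub {E : Finset (ℤ × ℤ)} (h : lambdafiable E) : E ⊆ Phi := by
  obtain ⟨f, hf⟩ := h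
  rw [← hf]
  exact Finset.filter_subset _ _

lemma lam_stable {E : Finset (ℤ × ℤ)} (h : lambdafiable E) : addStable E := by
  obtain ⟨f, hf⟩ := h
  apply stab_of E [f]
  rw [← hf]
  apply Finset.filter_congr
  intro v _
  simp

lemma lam_pair {E : Finset (ℤ × ℤ)} {f : (ℤ × ℤ) →+ ℤ}
    (hf : Phi.filter (fun v => 0 ≤ f v) = E) :
    ∀ v ∈ Phi, ∀ w ∈ Phi, v + w = 0 → v ∈ E ∨ w ∈ E := by
  intro v hv w hw hvw
  have hs : f v + f w = 0 := by rw [← map_add, hvw, map_zero]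
  rcases le_total 0 (f v) with h0 | h0
  · exact Or.inl (hf ▸ Finset.mem_filter.2 ⟨hv, h0⟩)
  · exact Or.inr (hf ▸ Finset.mem_filter.2 ⟨hw, by linarith⟩)

lemma three_le {E : Finset (ℤ × ℤ)} {a b c : ℤ × ℤ} (ha : a ∈ E) (hb : b ∈ E) (hc : c ∈ E)
    (hab : a ≠ b) (hac : a ≠ c) (hbc : b ≠ c) : 3 ≤ E.card := by
  have hsub : ({a, b, c} : Finset (ℤ × ℤ)) ⊆ E := by
    intro x hx
    simp only [Finset.mem_insert, Finset.mem_singleton] at hx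
    rcases hx with rfl | rfl | rfl <;> assumption
  have hle := Finset.card_le_card hsub
  rwa [Finset.card_insert_of_notMem (by simp [hab, hac]),
    Finset.card_insert_of_notMem (by simp [hbc]), Finset.card_singleton] at hle

lemma lam_card {E : Finset (ℤ × ℤ)} (h : lambdafiable E) : 3 ≤ E.card := by
  obtain ⟨f, hf⟩ := h
  have h1 := lam_pair hf ((1:ℤ),(0:ℤ)) (by decide) ((-1:ℤ),(0:ℤ)) (by decide) (by decide)
  have h2 := lam_pair hf ((0:ℤ),(1:ℤ)) (by decide) ((0:ℤ),(-1:ℤ)) (by decide) (by decide)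
  have h3 := lam_pair hf ((1:ℤ),(-1:ℤ)) (by decide) ((-1:ℤ),(1:ℤ)) (by decide) (by decide)
  rcases h1 with h1 | h1 <;> rcases h2 with h2 | h2 <;> rcases h3 with h3 | h3 <;>
    exact three_le h1 h2 h3 (by decide) (by decide) (by decide)

lemma lam_mem {E : Finset (ℤ × ℤ)} (h : lambdafiable E) : E ∈ L13 := by
  obtain ⟨f, hf⟩ := h
  have key : ∀ E ∈ Phi.powerset,
      (∀ v ∈ Phi, ∀ w ∈ Phi, v + w = 0 → v ∈ E ∨ w ∈ E) →
      (∀ u ∈ E, ∀ v ∈ E, u + v ∈ Phi → u + v ∈ E) → E ∈ L13 := by decide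
  apply key E (Finset.mem_powerset.2 (lam_sub ⟨f, hf⟩)) (lam_pair hf)
  intro u hu v hv hsum
  rw [← hf] at hu hv ⊢
  exact Finset.mem_filter.2 ⟨hsum, by
    have h1 := (Finset.mem_filter.1 hu).2
    have h2 := (Finset.mem_filter.1 hv).2
    rw [map_add]; exact add_nonneg h1 h2⟩

lemma L13_lam : ∀ E ∈ L13, lambdafiable E := by
  intro E hE
  simp only [L13, Finset.mem_insert, Finset.mem_singleton] at hE
  rcases hE with rfl|rfl|rfl|rfl|rfl|rfl|rfl|rfl|rfl|rfl|rfl|rfl|rfl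
  · exact ⟨mk 2 1, by decide⟩
  · exact ⟨mk 1 2, by decide⟩
  · exact ⟨mk 1 (-4), by decide⟩
  · exact ⟨mk (-4) 1, by decide⟩
  · exact ⟨mk (-3) (-4), by decide⟩
  · exact ⟨mk (-4) (-3), by decide⟩
  · exact ⟨mk 1 0, by decide⟩
  · exact ⟨mk 0 1, by decide⟩
  · exact ⟨mk 1 1, by decide⟩
  · exact ⟨mk 0 (-4), by decide⟩
  · exact ⟨mk (-4) 0, by decide⟩
  · exact ⟨mk (-4) (-4), by decide⟩
  · exact ⟨mk 0 0, by decide⟩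

lemma S16_stable : ∀ E ∈ S16, addStable E := by
  intro E hE
  simp only [S16, Finset.mem_insert, Finset.mem_singleton] at hE
  rcases hE with rfl|rfl|rfl|rfl|rfl|rfl|rfl|rfl|rfl|rfl|rfl|rfl|rfl|rfl|rfl|rfl
  · exact stab_of _ [mk (-2) (-1), mk 2 1] (by decide)
  · exact stab_of _ [mk 0 (-2), mk 1 2] (by decide)
  · exact stab_of _ [mk (-2) 0, mk 2 1] (by decide)
  · exact stab_of _ [mk (-2) (-2), mk 2 1] (by decide)
  · exact stab_of _ [mk (-2) (-1), mk 1 (-2)] (by decide)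
  · exact stab_of _ [mk (-2) (-2), mk 1 2] (by decide)
  · exact stab_of _ [mk (-2) 1, mk (-1) (-2)] (by decide)
  · exact stab_of _ [mk 0 1, mk 1 0] (by decide)
  · exact stab_of _ [mk 0 (-2), mk 1 1] (by decide)
  · exact stab_of _ [mk 0 (-2), mk 0 1] (by decide)
  · exact stab_of _ [mk (-2) 0, mk 1 0] (by decide)
  · exact stab_of _ [mk (-2) 0, mk 1 1] (by decide)
  · exact stab_of _ [mk (-2) (-2), mk 1 (-2)] (by decide)
  · exact stab_of _ [mk (-2) (-2), mk 1 1] (by decide)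
  · exact stab_of _ [mk (-2) (-1), mk (-1) (-2)] (by decide)
  · exact stab_of _ [mk (-2) (-2), mk (-2) 1] (by decide)

lemma unstable_of_witness {E : Finset (ℤ × ℤ)} (hst : addStable E)
    {u v : ℤ × ℤ} (hu : u ∈ E) (hv : v ∈ E) (hw : u + v ∈ Phi) : u + v ∈ E := by
  unfold addStable at hst
  have : u + v ∈ (AddSubmonoid.closure (E : Set (ℤ × ℤ)) : Set (ℤ × ℤ)) ∩ (Phi : Set (ℤ × ℤ)) :=
    ⟨AddSubmonoid.add_mem _ (AddSubmonoid.subset_closure (Finset.mem_coe.2 hu))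
      (AddSubmonoid.subset_closure (Finset.mem_coe.2 hv)), Finset.mem_coe.2 hw⟩
  rw [hst] at this
  exact Finset.mem_coe.1 this

lemma part1 : ∀ E : Finset (ℤ × ℤ), E ⊆ Phi → addStable E →
    (lambdafiable E ↔ 3 ≤ E.card) := by
  intro E hsub hst
  constructor
  · exact lam_card
  · intro hc
    have key : ∀ E ∈ Phi.powerset, 3 ≤ E.card →
        E ∈ L13 ∨ ∃ u ∈ E, ∃ v ∈ E, u + v ∈ Phi ∧ u + v ∉ E := by decide
    rcases key E (Finset.mem_powerset.2 hsub) hc with h | ⟨u, hu, v, hv, hw, hnw⟩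
    · exact L13_lam E h
    · exact absurd (unstable_of_witness hst hu hv hw) hnw

theorem stmt_15 :
    (∀ E : Finset (ℤ × ℤ), E ⊆ Phi → addStable E → (lambdafiable E ↔ 3 ≤ E.card)) ∧
    {E : Finset (ℤ × ℤ) | E ⊆ Phi ∧ addStable E ∧ lambdafiable E}.ncard = 13 ∧
    {E : Finset (ℤ × ℤ) | E ⊆ Phi ∧ addStable E ∧ ¬ lambdafiable E}.ncard = 16 := by
  refine ⟨part1, ?_, ?_⟩
  · have hA : {E : Finset (ℤ × ℤ) | E ⊆ Phi ∧ addStable E ∧ lambdafiable E} = ↑L13 := by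
      ext E
      simp only [Set.mem_setOf_eq, Finset.mem_coe]
      constructor
      · rintro ⟨-, -, hl⟩; exact lam_mem hl
      · intro h
        exact ⟨lam_sub (L13_lam E h), lam_stable (L13_lam E h), L13_lam E h⟩
    rw [hA, Set.ncard_coe_finset]
    decide
  · have hB : {E : Finset (ℤ × ℤ) | E ⊆ Phi ∧ addStable E ∧ ¬ lambdafiable E} = ↑S16 := by
      ext E
      simp only [Set.mem_setOf_eq, Finset.mem_coe]
      constructor
      · rintro ⟨hsub, hst, hnl⟩
        have hc : E.card ≤ 2 := by
          by_contra hcc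
          exact hnl ((part1 E hsub hst).2 (by omega))
        have key : ∀ E ∈ Phi.powerset, E.card ≤ 2 →
            E ∈ S16 ∨ ∃ u ∈ E, ∃ v ∈ E, u + v ∈ Phi ∧ u + v ∉ E := by decide
        rcases key E (Finset.mem_powerset.2 hsub) hc with h | ⟨u, hu, v, hv, hw, hnw⟩
        · exact h
        · exact absurd (unstable_of_witness hst hu hv hw) hnw
      · intro h
        have h1 : E ⊆ Phi := by
          have : ∀ E ∈ S16, E ⊆ Phi := by decide
          exact this E h
        have h2 : addStable E := S16_stable E h
        have h3 : ¬ lambdafiable E := by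
          intro hl
          have := lam_card hl
          have hc : E.card ≤ 2 := by
            have : ∀ E ∈ S16, E.card ≤ 2 := by decide
            exact this E h
          omega
        exact ⟨h1, h2, h3⟩
    rw [hB, Set.ncard_coe_finset]
    decide
end
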